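/- arXiv:2502.05619 — 2 statements merged into one kernel-verified Lean document; each statement's English description precedes it below -/
import Mathlib

section
/- Let E be a solvable non-degenerate evolution algebra over a field K with natural basis {e_1,...,e_n}. Then E has a one-dimensional ideal if and only if E has a basic ideal I (spanned by a subset of the natural basis) which is solvable with dim I^2 = 1 (equivalently, isomorphic to E_k(λ_1,...,λ_k) for some scalars λ with Σλ_j = 0). -/
/-!
In an evolution algebra `b i * y = yᵢ (b i)²`, so for a basic ideal `I = span (b '' S)` every
product `I * E` lies in the span of the squares `(b i)²`, `i ∈ S`, hence in `I²`; thus `I²` is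
itself an ideal whenever `I` is. Conversely, if `K ∙ v` is an ideal then `(b i) * v = vᵢ (b i)²`
shows that, for `i` in the support of `v`, each `(b i)²` is a multiple of `v`, nonzero by
non-degeneracy. The basic subspace spanned by that support is then an ideal whose square is
`K ∙ v`, and it is solvable because `E` is.
-/

open Submodule

variable {K : Type} [Field K] {E : Type} [AddCommGroup E] [Module K E]

/-- The product of two submodules under a bilinear multiplication. -/
def mulSet (μ : E →ₗ[K] E →ₗ[K] E) (U V : Submodule K E) : Submodule K E :=
  Submodule.span K {z | ∃ u ∈ U, ∃ v ∈ V, z = μ u v}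

/-- Derived series starting from a submodule: `dser μ I 0 = I`,
`dser μ I (k+1) = (dser μ I k)·(dser μ I k)`.  Thus `dser μ ⊤ (k-1) = E^(k)`. -/
def dser (μ : E →ₗ[K] E →ₗ[K] E) (I : Submodule K E) : ℕ → Submodule K E
  | 0 => I
  | k + 1 => mulSet μ (dser μ I k) (dser μ I k)

/-- Lower central-type series: `lowerPow μ k = E^(k+1)` where
`E^1 = E` and `E^(k+1) = Σ_{i=1}^k E^i E^(k+1-i)`. -/
def lowerPow (μ : E →ₗ[K] E →ₗ[K] E) : ℕ → Submodule K E
  | 0 => ⊤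
  | k + 1 => ⨆ i : Fin (k + 1), mulSet μ (lowerPow μ i.1) (lowerPow μ (k - i.1))
  decreasing_by
  · exact i.2
  · omega

/-- A submodule closed under the multiplication. -/
def IsSubalg (μ : E →ₗ[K] E →ₗ[K] E) (U : Submodule K E) : Prop :=
  ∀ x ∈ U, ∀ y ∈ U, μ x y ∈ U

/-- A (two-sided) ideal. -/
def IsIdeal (μ : E →ₗ[K] E →ₗ[K] E) (I : Submodule K E) : Prop :=
  ∀ x ∈ I, ∀ y : E, μ x y ∈ I ∧ μ y x ∈ I

/-- Subalgebra generated by a set. -/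
def gen (μ : E →ₗ[K] E →ₗ[K] E) (s : Set E) : Submodule K E :=
  sInf {W | IsSubalg μ W ∧ s ⊆ W}

/-- Quasi-ideal: the subalgebra generated together with any subalgebra is the vector-space sum. -/
def QuasiIdeal (μ : E →ₗ[K] E →ₗ[K] E) (U : Submodule K E) : Prop :=
  IsSubalg μ U ∧ ∀ V : Submodule K E, IsSubalg μ V → gen μ (↑U ∪ ↑V) = U ⊔ V

/-- The subalgebra lattice is modular. -/
def ModularLat (μ : E →ₗ[K] E →ₗ[K] E) : Prop :=
  ∀ U V W : Submodule K E, IsSubalg μ U → IsSubalg μ V → IsSubalg μ W → U ≤ W →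
    gen μ (↑U ∪ ↑(V ⊓ W)) = gen μ (↑U ∪ ↑V) ⊓ W

/-- The subalgebra lattice is distributive. -/
def DistribLat (μ : E →ₗ[K] E →ₗ[K] E) : Prop :=
  ∀ U V W : Submodule K E, IsSubalg μ U → IsSubalg μ V → IsSubalg μ W →
    gen μ (↑U ∪ ↑(V ⊓ W)) = gen μ (↑U ∪ ↑V) ⊓ gen μ (↑U ∪ ↑W)

/-- Supersolvable: a complete flag of ideals. -/
def Supersolvable (μ : E →ₗ[K] E →ₗ[K] E) : Prop :=
  ∃ I : ℕ → Submodule K E, (∀ i, IsIdeal μ (I i)) ∧ (∀ i, I i ≤ I (i + 1)) ∧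
    (∀ i ≤ Module.finrank K E, Module.finrank K (I i) = i) ∧ I (Module.finrank K E) = ⊤

/-- Maximal subalgebra `A` of the subalgebra `B`. -/
def MaxIn (μ : E →ₗ[K] E →ₗ[K] E) (A B : Submodule K E) : Prop :=
  A ≤ B ∧ A ≠ B ∧ ∀ W : Submodule K E, IsSubalg μ W → A ≤ W → W ≤ B → W = A ∨ W = B

lemma mul_mem_mulSet (μ : E →ₗ[K] E →ₗ[K] E) {U V : Submodule K E} {u v : E}
    (hu : u ∈ U) (hv : v ∈ V) : μ u v ∈ mulSet μ U V :=
  subset_span ⟨u, hu, v, hv, rfl⟩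

lemma mulSet_le (μ : E →ₗ[K] E →ₗ[K] E) {U V W : Submodule K E}
    (h : ∀ u ∈ U, ∀ v ∈ V, μ u v ∈ W) : mulSet μ U V ≤ W := by
  rw [mulSet, span_le]
  rintro _ ⟨u, hu, v, hv, rfl⟩
  exact h u hu v hv

lemma mulSet_mono (μ : E →ₗ[K] E →ₗ[K] E) {U V U' V' : Submodule K E}
    (hU : U ≤ U') (hV : V ≤ V') : mulSet μ U V ≤ mulSet μ U' V' :=
  mulSet_le μ fun _ hu _ hv => mul_mem_mulSet μ (hU hu) (hV hv)

lemma dser_mono (μ : E →ₗ[K] E →ₗ[K] E) {I J : Submodule K E} (h : I ≤ J) :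
    ∀ m, dser μ I m ≤ dser μ J m
  | 0 => h
  | m + 1 => mulSet_mono μ (dser_mono μ h m) (dser_mono μ h m)

lemma dser_eq_bot_of_le (μ : E →ₗ[K] E →ₗ[K] E) {I J : Submodule K E} (h : I ≤ J) {m : ℕ}
    (hJ : dser μ J m = ⊥) : dser μ I m = ⊥ :=
  le_bot_iff.1 (hJ ▸ dser_mono μ h m)

lemma isIdeal_of_mul_mem_left (μ : E →ₗ[K] E →ₗ[K] E) (hcomm : ∀ x y : E, μ x y = μ y x)
    {I : Submodule K E} (h : ∀ x ∈ I, ∀ y, μ x y ∈ I) : IsIdeal μ I :=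
  fun x hx y => ⟨h x hx y, hcomm y x ▸ h x hx y⟩

lemma exists_eq_span_singleton_of_finrank_eq_one {J : Submodule K E}
    (hJ : Module.finrank K J = 1) : ∃ v ≠ (0 : E), J = K ∙ v := by
  have hne : J ≠ ⊥ := fun h => by subst h; simp at hJ
  obtain ⟨v, hvJ, hv⟩ := J.ne_bot_iff.1 hne
  exact ⟨v, hv, eq_span_singleton_of_mem_of_finrank_eq_one hJ hvJ hv⟩

section NaturalBasis

variable {ι : Type*} {μ : E →ₗ[K] E →ₗ[K] E} {b : Module.Basis ι K E}

lemma mul_basis_left_eq_smul (hnat : ∀ i j, i ≠ j → μ (b i) (b j) = 0) (i : ι) (y : E) :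
    μ (b i) y = b.repr y i • μ (b i) (b i) := by
  have : μ (b i) = (b.coord i).smulRight (μ (b i) (b i)) := b.ext fun j => by
    rcases eq_or_ne i j with rfl | hij
    · simp
    · simp [hnat i j hij, hij]
  exact LinearMap.congr_fun this y

lemma mul_mem_of_mem_span_basis (hnat : ∀ i j, i ≠ j → μ (b i) (b j) = 0) {S : Set ι}
    {W : Submodule K E} (hW : ∀ i ∈ S, μ (b i) (b i) ∈ W) {x : E}
    (hx : x ∈ span K (b '' S)) (y : E) : μ x y ∈ W := by
  suffices span K (b '' S) ≤ ⨅ y, W.comap (μ.flip y) by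
    simpa using (mem_iInf _).1 (this hx) y
  refine span_le.2 ?_
  rintro _ ⟨i, hi, rfl⟩
  simp only [SetLike.mem_coe, mem_iInf, mem_comap, LinearMap.flip_apply]
  intro y
  rw [mul_basis_left_eq_smul hnat]
  exact W.smul_mem _ (hW i hi)

lemma mul_mem_mulSet_self_of_mem_span_basis (hnat : ∀ i j, i ≠ j → μ (b i) (b j) = 0)
    {S : Set ι} {x : E} (hx : x ∈ span K (b '' S)) (y : E) :
    μ x y ∈ mulSet μ (span K (b '' S)) (span K (b '' S)) :=
  have hbS : ∀ i ∈ S, b i ∈ span K (b '' S) := fun _ hi => subset_span (Set.mem_image_of_mem b hi)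
  mul_mem_of_mem_span_basis hnat (fun i hi => mul_mem_mulSet μ (hbS i hi) (hbS i hi)) hx y

lemma IsIdeal.mulSet_self_of_span_basis (hcomm : ∀ x y : E, μ x y = μ y x)
    (hnat : ∀ i j, i ≠ j → μ (b i) (b j) = 0) {S : Set ι}
    (hI : IsIdeal μ (span K (b '' S))) :
    IsIdeal μ (mulSet μ (span K (b '' S)) (span K (b '' S))) :=
  isIdeal_of_mul_mem_left μ hcomm fun _ hz =>
    mul_mem_mulSet_self_of_mem_span_basis hnat (mulSet_le μ (fun u hu w _ => (hI u hu w).1) hz)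

theorem isIdeal_span_basis_support_of_isIdeal_span_singleton
    (hcomm : ∀ x y : E, μ x y = μ y x) (hnat : ∀ i j, i ≠ j → μ (b i) (b j) = 0)
    (hnondeg : ∀ i, μ (b i) (b i) ≠ 0) {v : E} (hv : v ≠ 0) (hJ : IsIdeal μ (K ∙ v)) :
    IsIdeal μ (span K (b '' (b.repr v).support)) ∧
      mulSet μ (span K (b '' (b.repr v).support)) (span K (b '' (b.repr v).support)) = K ∙ v := by
  set I := span K (b '' (b.repr v).support)
  -- `b i * v = vᵢ (b i)²` lies in `K ∙ v`, and `vᵢ ≠ 0` on the support.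
  have hsq : ∀ i ∈ (b.repr v).support, μ (b i) (b i) ∈ K ∙ v := by
    intro i hi
    have h := (hJ v (mem_span_singleton_self v) (b i)).2
    rw [mul_basis_left_eq_smul hnat] at h
    simpa [Finsupp.mem_support_iff.1 hi] using (K ∙ v).smul_mem (b.repr v i)⁻¹ h
  have hIv : ∀ x ∈ I, ∀ y, μ x y ∈ K ∙ v := fun x hx y => mul_mem_of_mem_span_basis hnat hsq hx y
  have hvI : K ∙ v ≤ I := (span_singleton_le_iff_mem v I).2 (b.mem_span_repr_support v)
  refine ⟨isIdeal_of_mul_mem_left μ hcomm fun x hx y => hvI (hIv x hx y),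
    le_antisymm (mulSet_le μ fun x hx y _ => hIv x hx y) ?_⟩
  obtain ⟨i, hi⟩ : ((b.repr v).support).Nonempty := by simpa using hv
  obtain ⟨c, hc⟩ := mem_span_singleton.1 (hsq i hi)
  have hc0 : c ≠ 0 := by rintro rfl; exact hnondeg i (by simp [← hc])
  have hbi : b i ∈ I := subset_span ⟨i, hi, rfl⟩
  rw [span_singleton_le_iff_mem, ← inv_smul_smul₀ hc0 v, hc]
  exact smul_mem _ _ (mul_mem_mulSet μ hbi hbi)

end NaturalBasis

/-- a solvable non-degenerate evolution algebra has a one-dimensional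
ideal iff it has a basic ideal `I` (spanned by part of the natural basis) which is
solvable with `dim I² = 1`. -/
theorem stmt7 {n : ℕ} (μ : E →ₗ[K] E →ₗ[K] E)
    (hcomm : ∀ x y : E, μ x y = μ y x)
    (b : Module.Basis (Fin n) K E)
    (hnat : ∀ i j : Fin n, i ≠ j → μ (b i) (b j) = 0)
    (hnondeg : ∀ i : Fin n, μ (b i) (b i) ≠ 0)
    (hsolv : ∃ m : ℕ, dser μ ⊤ m = ⊥) :
    (∃ J : Submodule K E, IsIdeal μ J ∧ Module.finrank K J = 1) ↔
      (∃ S : Set (Fin n),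
        IsIdeal μ (Submodule.span K (b '' S)) ∧
        (∃ m : ℕ, dser μ (Submodule.span K (b '' S)) m = ⊥) ∧
        Module.finrank K
          (mulSet μ (Submodule.span K (b '' S)) (Submodule.span K (b '' S))) = 1) := by
  constructor
  · rintro ⟨J, hJ, hJ1⟩
    obtain ⟨v, hv, rfl⟩ := exists_eq_span_singleton_of_finrank_eq_one hJ1
    obtain ⟨hI, hII⟩ :=
      isIdeal_span_basis_support_of_isIdeal_span_singleton hcomm hnat hnondeg hv hJ
    obtain ⟨m, hm⟩ := hsolv
    exact ⟨_, hI, ⟨m, dser_eq_bot_of_le μ le_top hm⟩, by rw [hII, finrank_span_singleton hv]⟩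
  · rintro ⟨S, hI, -, hrank⟩
    exact ⟨_, hI.mulSet_self_of_span_basis hcomm hnat, hrank⟩
end

section
/- Let E be a nilpotent evolution algebra over a quadratically closed field K of characteristic ≠ 2 whose annihilator is one-dimensional, with strictly upper triangular structure matrix relative to a natural basis. If some first-superdiagonal entry of the structure matrix vanishes (i.e., E does not have maximum index of nilpotency), then there exist scalars α_1,...,α_{n-1} ∈ K, not all zero, with α_1 e_1^2 + ... + α_{n-1} e_{n-1}^2 = 0, and consequently √α_1 e_1 + ... + √α_{n-1} e_{n-1} is an absolute nilpotent element of E not in the annihilator; hence E is not modular. -/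
open Submodule

variable {K : Type} [Field K] {E : Type} [AddCommGroup E] [Module K E]

/-!
Start at an index `i` with vanishing superdiagonal entry. Then `e_i², …, e_{n-2}²` are `n - 1 - i`
vectors in `span {e_{i+2}, …, e_{n-1}}`, a space of dimension `n - 2 - i`, so they satisfy a
nontrivial relation `∑ αⱼ eⱼ² = 0`, and `x = ∑ √αⱼ eⱼ` squares to zero. As none of these `eⱼ`
lies in the annihilator, `x` has two indices `j < m` in its support, and `v = e_m - x / (2 x_m)`
also squares to zero. For `U = K x`, `V = K v` and `W = K x + span {e_k | k > m}` one has
`U ≤ W` and `V ⊓ W = 0`, while `v x = x_m e_m²` lies in `⟨U ∪ V⟩ ⊓ W` but not in `U`: the modular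
law fails.
-/

theorem exists_ne_zero_sum_smul_eq_zero {ι : Type*} [Fintype ι] {v : ι → E} {s : Finset ι}
    {T : Finset E} (hvT : ∀ i ∈ s, v i ∈ span K (T : Set E)) (hcard : T.card < s.card) :
    ∃ α : ι → K, α ≠ 0 ∧ ∑ i, α i • v i = 0 := by
  have hdep : ¬ LinearIndepOn K v (s : Set ι) := by
    intro hli
    have hli' : LinearIndependent K
        fun i : (s : Set ι) => (⟨v i, hvT i i.2⟩ : span K (T : Set E)) :=
      LinearIndependent.of_comp (span K (T : Set E)).subtype hli
    have hs := hli'.fintype_card_le_finrank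
    simp only [Finset.coe_sort_coe, Fintype.card_coe] at hs
    exact hcard.not_ge (hs.trans (finrank_span_finset_le_card T))
  obtain ⟨f, -, hf, hf0⟩ := linearDepOn_iff.1 hdep
  refine ⟨f, by simpa using hf0, ?_⟩
  rwa [← Finset.sum_subset (Finset.subset_univ _) fun i _ hi => by
    rw [Finsupp.notMem_support_iff.1 hi, zero_smul]]

section Generation

variable {μ : E →ₗ[K] E →ₗ[K] E}

theorem subset_gen (s : Set E) : s ⊆ gen μ s :=
  fun _ hx => mem_sInf.2 fun _ hW => hW.2 hx

theorem gen_le {s : Set E} {W : Submodule K E} (hW : IsSubalg μ W) (hs : s ⊆ W) :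
    gen μ s ≤ W :=
  sInf_le ⟨hW, hs⟩

theorem isSubalg_gen (s : Set E) : IsSubalg μ (gen μ s) := fun x hx y hy =>
  mem_sInf.2 fun W hW => hW.1 x (mem_sInf.1 hx W hW) y (mem_sInf.1 hy W hW)

theorem isSubalg_span_singleton {x : E} (hx : μ x x = 0) : IsSubalg μ (K ∙ x) := by
  intro y hy z hz
  obtain ⟨a, rfl⟩ := mem_span_singleton.1 hy
  obtain ⟨c, rfl⟩ := mem_span_singleton.1 hz
  simp [hx]

theorem IsSubalg.sup_of_isIdeal {U I : Submodule K E} (hU : IsSubalg μ U) (hI : IsIdeal μ I) :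
    IsSubalg μ (U ⊔ I) := by
  intro x hx y hy
  obtain ⟨u, hu, i, hi, rfl⟩ := mem_sup.1 hx
  obtain ⟨u', hu', i', hi', rfl⟩ := mem_sup.1 hy
  simp only [map_add, LinearMap.add_apply]
  exact add_mem (add_mem (mem_sup_left (hU u hu u' hu')) (mem_sup_right (hI i hi u').1))
    (mem_sup_right (add_mem (hI i' hi' u).2 (hI i hi i').1))

theorem not_modularLat_of_mem_gen {U V W : Submodule K E} (hU : IsSubalg μ U)
    (hV : IsSubalg μ V) (hW : IsSubalg μ W) (hUW : U ≤ W) (hVW : V ⊓ W ≤ U) {z : E}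
    (hz : z ∈ gen μ (↑U ∪ ↑V)) (hzW : z ∈ W) (hzU : z ∉ U) : ¬ ModularLat μ := by
  intro hM
  have hgen : gen μ (↑U ∪ ↑(V ⊓ W)) ≤ U := gen_le hU (Set.union_subset subset_rfl hVW)
  exact hzU (hgen (hM U V W hU hV hW hUW ▸ mem_inf.2 ⟨hz, hzW⟩))

end Generation

section Evolution

variable {μ : E →ₗ[K] E →ₗ[K] E} {ι : Type*} (b : Module.Basis ι K E)

theorem mul_self_mem_span_Ioi [LinearOrder ι]
    (hupper : ∀ i k, k ≤ i → b.repr (μ (b i) (b i)) k = 0) (i : ι) :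
    μ (b i) (b i) ∈ span K (b '' Set.Ioi i) :=
  b.mem_span_image.2 fun k hk =>
    lt_of_not_ge fun hki => Finsupp.mem_support_iff.1 hk (hupper i k hki)

theorem span_singleton_sub_inf_le [LinearOrder ι] {x : E} {j m : ι} (hjm : j < m)
    (hj : b.repr x j ≠ 0) (t : K) :
    (K ∙ (b m - t • x)) ⊓ ((K ∙ x) ⊔ span K (b '' Set.Ioi m)) ≤ K ∙ x := by
  -- this functional kills `x` and every `b k` with `k > m`, but not `b m`
  obtain ⟨φ, hφ⟩ : ∃ φ : E →ₗ[K] K,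
      φ = b.repr x j • b.coord m - b.repr x m • b.coord j := ⟨_, rfl⟩
  have hφW : (K ∙ x) ⊔ span K (b '' Set.Ioi m) ≤ LinearMap.ker φ := by
    refine sup_le ((span_singleton_le_iff_mem _ _).2 ?_) (span_le.2 ?_)
    · simp [hφ, mul_comm]
    · rintro _ ⟨k, hk, rfl⟩
      simp [hφ, hk.ne', (hjm.trans hk).ne']
  have hφv : φ (b m - t • x) = b.repr x j := by
    have hφx : φ x = 0 := hφW (mem_sup_left (mem_span_singleton_self x))
    rw [map_sub, map_smul, hφx, smul_zero, sub_zero, hφ]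
    simp [hjm.ne']
  rintro w ⟨hwV, hwW⟩
  obtain ⟨a, rfl⟩ := mem_span_singleton.1 hwV
  have : a * b.repr x j = 0 := by simpa [hφv] using hφW hwW
  simp [(mul_eq_zero.1 this).resolve_right hj]

variable [Fintype ι]

theorem sum_smul_mul {e : ι → E} (he : Pairwise fun i j => μ (e i) (e j) = 0) (c : ι → K)
    (k : ι) : μ (∑ i, c i • e i) (e k) = c k • μ (e k) (e k) := by
  rw [map_sum, LinearMap.sum_apply, Fintype.sum_eq_single k fun i hi => by
    rw [map_smul, LinearMap.smul_apply, he hi, smul_zero], map_smul, LinearMap.smul_apply]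

theorem mul_sum_smul {e : ι → E} (he : Pairwise fun i j => μ (e i) (e j) = 0) (c : ι → K)
    (k : ι) : μ (e k) (∑ i, c i • e i) = c k • μ (e k) (e k) := by
  rw [map_sum, Fintype.sum_eq_single k fun i hi => by rw [map_smul, he hi.symm, smul_zero],
    map_smul]

theorem sum_smul_mul_sum_smul {e : ι → E} (he : Pairwise fun i j => μ (e i) (e j) = 0)
    (c d : ι → K) :
    μ (∑ i, c i • e i) (∑ i, d i • e i) = ∑ i, (c i * d i) • μ (e i) (e i) := by
  simp only [map_sum (μ _), map_smul, sum_smul_mul he, smul_smul, mul_comm]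

theorem mul_eq_sum_repr (hb : Pairwise fun i j => μ (b i) (b j) = 0) (x y : E) :
    μ x y = ∑ k, (b.repr x k * b.repr y k) • μ (b k) (b k) := by
  conv_lhs => rw [← b.sum_repr x, ← b.sum_repr y]
  exact sum_smul_mul_sum_smul hb _ _

theorem mul_basis_eq (hb : Pairwise fun i j => μ (b i) (b j) = 0) (x : E) (k : ι) :
    μ x (b k) = b.repr x k • μ (b k) (b k) := by
  conv_lhs => rw [← b.sum_repr x]
  exact sum_smul_mul hb _ k

theorem basis_mul_eq (hb : Pairwise fun i j => μ (b i) (b j) = 0) (x : E) (k : ι) :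
    μ (b k) x = b.repr x k • μ (b k) (b k) := by
  conv_lhs => rw [← b.sum_repr x]
  exact mul_sum_smul hb _ k

variable [LinearOrder ι]

theorem isIdeal_span_Ioi (hb : Pairwise fun i j => μ (b i) (b j) = 0)
    (hupper : ∀ i k, k ≤ i → b.repr (μ (b i) (b i)) k = 0) (m : ι) :
    IsIdeal μ (span K (b '' Set.Ioi m)) := by
  have hsq : ∀ k ∈ Set.Ioi m, μ (b k) (b k) ∈ span K (b '' Set.Ioi m) := fun k hk =>
    span_mono (Set.image_mono (Set.Ioi_subset_Ioi hk.le)) (mul_self_mem_span_Ioi b hupper k)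
  intro x hx y
  constructor
  · refine (span_le.2 ?_ : _ ≤ (span K (b '' Set.Ioi m)).comap (μ.flip y)) hx
    rintro _ ⟨k, hk, rfl⟩
    rw [SetLike.mem_coe, mem_comap, LinearMap.flip_apply, basis_mul_eq b hb]
    exact smul_mem _ _ (hsq k hk)
  · refine (span_le.2 ?_ : _ ≤ (span K (b '' Set.Ioi m)).comap (μ y)) hx
    rintro _ ⟨k, hk, rfl⟩
    rw [SetLike.mem_coe, mem_comap, mul_basis_eq b hb]
    exact smul_mem _ _ (hsq k hk)

theorem not_modularLat_of_lt (hb : Pairwise fun i j => μ (b i) (b j) = 0)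
    (hupper : ∀ i k, k ≤ i → b.repr (μ (b i) (b i)) k = 0) (h2 : (2 : K) ≠ 0) {x : E}
    (hxx : μ x x = 0) {j m : ι} (hjm : j < m) (hj : b.repr x j ≠ 0) (hm : b.repr x m ≠ 0)
    (hmm : μ (b m) (b m) ≠ 0) : ¬ ModularLat μ := by
  obtain ⟨v, hv⟩ : ∃ v, v = b m - (2 * b.repr x m)⁻¹ • x := ⟨_, rfl⟩
  have hvx : μ v x = b.repr x m • μ (b m) (b m) := by
    rw [hv, map_sub, map_smul, LinearMap.sub_apply, LinearMap.smul_apply, hxx, smul_zero,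
      sub_zero, basis_mul_eq b hb]
  have hvv : μ v v = 0 := by
    have hv2 : 2 * ((2 * b.repr x m)⁻¹ * b.repr x m) = 1 := by field_simp
    calc μ v v = μ v (b m) - (2 * b.repr x m)⁻¹ • μ v x := by
          nth_rewrite 2 [hv]
          rw [map_sub, map_smul]
      _ = (1 - 2 * ((2 * b.repr x m)⁻¹ * b.repr x m)) • μ (b m) (b m) := by
          rw [hvx, hv, map_sub, map_smul, LinearMap.sub_apply, LinearMap.smul_apply,
            mul_basis_eq b hb x m]
          module
      _ = 0 := by rw [hv2, sub_self, zero_smul]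
  refine not_modularLat_of_mem_gen (isSubalg_span_singleton hxx) (isSubalg_span_singleton hvv)
    ((isSubalg_span_singleton hxx).sup_of_isIdeal (isIdeal_span_Ioi b hb hupper m)) le_sup_left
    (by rw [hv]; exact span_singleton_sub_inf_le b hjm hj _) (z := μ v x) ?_ ?_ ?_
  · exact isSubalg_gen _ v (subset_gen _ (Or.inr (mem_span_singleton_self v))) x
      (subset_gen _ (Or.inl (mem_span_singleton_self x)))
  · rw [hvx]
    exact mem_sup_right (smul_mem _ _ (mul_self_mem_span_Ioi b hupper m))
  · rw [hvx]
    intro h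
    obtain ⟨a, ha⟩ := mem_span_singleton.1 h
    have := congrArg (fun y => b.repr y m) ha
    simp only [map_smul, Finsupp.smul_apply, smul_eq_mul, hupper m m le_rfl, mul_zero,
      mul_eq_zero, hm, or_false] at this
    rw [this, zero_smul] at ha
    exact smul_ne_zero hm hmm ha.symm

theorem not_modularLat_of_mul_self_eq_zero (hb : Pairwise fun i j => μ (b i) (b j) = 0)
    (hupper : ∀ i k, k ≤ i → b.repr (μ (b i) (b i)) k = 0) (h2 : (2 : K) ≠ 0) {x : E}
    (hxx : μ x x = 0) (hx : x ≠ 0) (hsupp : ∀ k, b.repr x k ≠ 0 → μ (b k) (b k) ≠ 0) :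
    ¬ ModularLat μ := by
  obtain ⟨i, hi⟩ : ∃ i, b.repr x i ≠ 0 := by
    by_contra! h
    exact hx (b.repr.injective (Finsupp.ext fun k => by simpa using h k))
  obtain ⟨j, hji, hj⟩ : ∃ j ≠ i, b.repr x j ≠ 0 := by
    by_contra! h
    rw [mul_eq_sum_repr b hb, Fintype.sum_eq_single i fun k hk => by rw [h k hk, zero_mul,
      zero_smul]] at hxx
    exact smul_ne_zero (mul_ne_zero hi hi) (hsupp i hi) hxx
  rcases hji.lt_or_gt with hlt | hlt
  · exact not_modularLat_of_lt b hb hupper h2 hxx hlt hj hi (hsupp i hi)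
  · exact not_modularLat_of_lt b hb hupper h2 hxx hlt hi hj (hsupp j hj)

end Evolution

section FinBasis

variable {n : ℕ} {μ : E →ₗ[K] E →ₗ[K] E} (b : Module.Basis (Fin n) K E)

theorem mul_self_basis_ne_zero (hupper : ∀ i k : Fin n, k ≤ i → b.repr (μ (b i) (b i)) k = 0)
    (hann : ∃! i : Fin n, μ (b i) (b i) = 0) {k : Fin n} (hk : k.1 + 1 < n) :
    μ (b k) (b k) ≠ 0 := by
  have hlast : μ (b ⟨n - 1, by omega⟩) (b ⟨n - 1, by omega⟩) = 0 :=
    b.repr.map_eq_zero_iff.1 <| Finsupp.ext fun l =>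
      hupper _ l (Fin.le_def.2 (show l.1 ≤ n - 1 by omega))
  intro hk0
  have : k.1 = n - 1 := congrArg Fin.val (hann.unique hk0 hlast)
  omega

theorem exists_sum_smul_mul_self_eq_zero
    (hupper : ∀ i k : Fin n, k ≤ i → b.repr (μ (b i) (b i)) k = 0) {i : Fin n}
    (hi : i.1 + 1 < n) (hi0 : b.repr (μ (b i) (b i)) ⟨i.1 + 1, hi⟩ = 0) :
    ∃ α : Fin (n - 1) → K, α ≠ 0 ∧
      ∑ j : Fin (n - 1), α j • μ (b ⟨j.1, by omega⟩) (b ⟨j.1, by omega⟩) = 0 := by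
  classical
  refine exists_ne_zero_sum_smul_eq_zero (s := Finset.Ici ⟨i.1, by omega⟩)
    (T := (Finset.Ioi (⟨i + 1, hi⟩ : Fin n)).image b) (fun j hj => ?_) ?_
  · rw [Finset.coe_image, Finset.coe_Ioi, b.mem_span_image]
    intro k hk
    have hjk : j.1 < k.1 := lt_of_not_ge fun h =>
      Finsupp.mem_support_iff.1 hk (hupper _ k (Fin.le_def.2 h))
    have hij : i.1 ≤ j.1 := Fin.le_def.1 (Finset.mem_Ici.1 hj)
    show i.1 + 1 < k.1
    by_contra hki
    have hj' : (⟨j.1, by omega⟩ : Fin n) = i := Fin.ext (by simp only; omega)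
    have hk' : k = ⟨i.1 + 1, hi⟩ := Fin.ext (by simp only; omega)
    rw [hj', hk'] at hk
    exact Finsupp.mem_support_iff.1 hk hi0
  · refine Finset.card_image_le.trans_lt ?_
    simp only [Fin.card_Ici, Fin.card_Ioi]
    omega

end FinBasis

/-- let `E` be a nilpotent evolution algebra over a quadratically closed
field of characteristic ≠ 2 with one-dimensional annihilator (exactly one basis vector
squares to zero) and strictly upper triangular structure matrix.  If some
first-superdiagonal entry vanishes, then some nontrivial combination
`α₁e₁² + ⋯ + α_{n-1}e_{n-1}² = 0` exists, `√α₁ e₁ + ⋯ + √α_{n-1} e_{n-1}` is an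
absolute nilpotent element outside the annihilator, and `E` is not modular. -/
theorem stmt16 {n : ℕ} (h2 : (2 : K) ≠ 0) (hqc : ∀ a : K, ∃ c : K, c ^ 2 = a)
    (μ : E →ₗ[K] E →ₗ[K] E)
    (b : Module.Basis (Fin n) K E)
    (hnat : ∀ i j : Fin n, i ≠ j → μ (b i) (b j) = 0)
    (hupper : ∀ i k : Fin n, k ≤ i → b.repr (μ (b i) (b i)) k = 0)
    (hann : ∃! i : Fin n, μ (b i) (b i) = 0)
    (hzero : ∃ i : ℕ, ∃ h : i + 1 < n,
      b.repr (μ (b ⟨i, by omega⟩) (b ⟨i, by omega⟩)) ⟨i + 1, h⟩ = 0) :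
    (∃ α : Fin (n - 1) → K, α ≠ 0 ∧
      (∑ i : Fin (n - 1), α i • μ (b ⟨i.1, by omega⟩) (b ⟨i.1, by omega⟩)) = 0 ∧
      ∃ β : Fin (n - 1) → K, (∀ i, β i ^ 2 = α i) ∧
        μ (∑ i : Fin (n - 1), β i • b ⟨i.1, by omega⟩)
            (∑ i : Fin (n - 1), β i • b ⟨i.1, by omega⟩) = 0 ∧
        ∃ y : E, μ (∑ i : Fin (n - 1), β i • b ⟨i.1, by omega⟩) y ≠ 0) ∧
    ¬ ModularLat μ := by
  obtain ⟨i, hi, hi0⟩ := hzero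
  obtain ⟨α, hα, hαsum⟩ := exists_sum_smul_mul_self_eq_zero b hupper (i := ⟨i, by omega⟩) hi hi0
  choose sqrt hsqrt using hqc
  have he : Pairwise fun j k : Fin (n - 1) =>
      μ (b ⟨j.1, by omega⟩) (b ⟨k.1, by omega⟩) = 0 :=
    fun j k hjk => hnat _ _ fun h => hjk (Fin.ext (Fin.mk.inj h))
  set x := ∑ j : Fin (n - 1), sqrt (α j) • b ⟨j.1, by omega⟩
  have hxx : μ x x = 0 := by
    rw [sum_smul_mul_sum_smul he]
    simpa only [← sq, hsqrt] using hαsum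
  obtain ⟨j, hj⟩ : ∃ j, sqrt (α j) ≠ 0 := by
    by_contra! h
    exact hα (funext fun j => by rw [← hsqrt (α j), h j, zero_pow two_ne_zero, Pi.zero_apply])
  have hxj : μ x (b ⟨j.1, by omega⟩) ≠ 0 := by
    rw [sum_smul_mul he]
    exact smul_ne_zero hj (mul_self_basis_ne_zero b hupper hann (show j.1 + 1 < n by omega))
  refine ⟨⟨α, hα, hαsum, sqrt ∘ α, fun j => hsqrt _, hxx, _, hxj⟩, ?_⟩
  have hsupp : x ∈ span K (b '' {k | k.1 + 1 < n}) :=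
    sum_mem fun j _ => smul_mem _ _ (subset_span ⟨_, show j.1 + 1 < n by omega, rfl⟩)
  refine not_modularLat_of_mul_self_eq_zero b hnat hupper h2 hxx ?_ fun k hk =>
    mul_self_basis_ne_zero b hupper hann (b.mem_span_image.1 hsupp (Finsupp.mem_support_iff.2 hk))
  exact fun hx0 => hxj (by rw [hx0, map_zero, LinearMap.zero_apply])
end
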